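/- arXiv:2310.10617 — 3 statements merged into one kernel-verified Lean document; each statement's English description precedes it below -/
import Mathlib

section
/- Suppose f : (0,∞) → ℝ is continuously differentiable, and there exist constants a ∈ (0,1) and A > 0 such that |f'(x)| ≤ A·x^{a−1} for all x > 0, and such that f(x) = Ω_+(x^a) (there is C > 0 with f(x) > C·x^a for arbitrarily large x). Then f(x) = Ω_+^*(x^a): there is C' > 0 such that for every r > 0 there exist arbitrarily large x with f(y) > C'·x^a for all y ∈ [x, x+r). -/
open Set

/- If `f(x) > C x^a`, then on `[x, x + r)` the derivative bound `|f'| ≤ A x^(a-1)` lets `f` drop by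
at most `A r x^(a-1) = (A r / x) x^a`, which is below `(C/2) x^a` once `x > 2 A r / C`; so `f` stays
above `(C/2) x^a` on the whole interval. -/

lemma abs_sub_le_of_abs_deriv_le_rpow {f : ℝ → ℝ} {a A x y : ℝ} (ha : a ≤ 1) (hA : 0 ≤ A)
    (hf : DifferentiableOn ℝ f (Ioi 0)) (hderiv : ∀ t : ℝ, 0 < t → |deriv f t| ≤ A * t ^ (a - 1))
    (hx : 0 < x) (hxy : x ≤ y) :
    |f y - f x| ≤ A * x ^ (a - 1) * (y - x) := by
  have hpos : Icc x y ⊆ Ioi 0 := fun t ht => hx.trans_le ht.1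
  have hdiff : ∀ t ∈ Icc x y, DifferentiableAt ℝ f t := fun t ht =>
    hf.differentiableAt (isOpen_Ioi.mem_nhds (hpos ht))
  have hbound : ∀ t ∈ Icc x y, ‖deriv f t‖ ≤ A * x ^ (a - 1) := fun t ht =>
    (hderiv t (hpos ht)).trans <|
      mul_le_mul_of_nonneg_left (Real.rpow_le_rpow_of_nonpos hx ht.1 (by linarith)) hA
  have := (convex_Icc x y).norm_image_sub_le_of_norm_deriv_le hdiff hbound
    (left_mem_Icc.2 hxy) (right_mem_Icc.2 hxy)
  rwa [Real.norm_eq_abs, Real.norm_eq_abs, abs_of_nonneg (sub_nonneg.2 hxy)] at this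

lemma mul_rpow_sub_one_le_mul_rpow {a c d x : ℝ} (hx : 0 < x) (h : d ≤ c * x) :
    d * x ^ (a - 1) ≤ c * x ^ a := by
  rw [Real.rpow_sub_one hx.ne', ← mul_div_assoc, div_le_iff₀ hx, mul_right_comm]
  exact mul_le_mul_of_nonneg_right h (Real.rpow_nonneg hx.le a)

theorem stmt_3_general (f : ℝ → ℝ) (a A : ℝ) (ha1 : a < 1) (hA : 0 < A)
    (hf : ContDiffOn ℝ 1 f (Set.Ioi 0))
    (hderiv : ∀ x : ℝ, 0 < x → |deriv f x| ≤ A * x ^ (a - 1))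
    (hΩ : ∃ C > 0, ∀ X : ℝ, ∃ x > X, f x > C * x ^ a) :
    ∃ C' > 0, ∀ r > 0, ∀ X : ℝ, ∃ x > X,
      ∀ y ∈ Set.Ico x (x + r), f y > C' * x ^ a := by
  obtain ⟨C, hC, hCx⟩ := hΩ
  refine ⟨C / 2, by positivity, fun r hr X => ?_⟩
  obtain ⟨x, hx, hfx⟩ := hCx (max X (2 * A * r / C))
  obtain ⟨hXx, hrx⟩ := max_lt_iff.1 hx
  have hx0 : 0 < x := lt_of_le_of_lt (by positivity) hrx
  have hdrop : A * r * x ^ (a - 1) ≤ C / 2 * x ^ a :=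
    mul_rpow_sub_one_le_mul_rpow hx0 (by rw [div_lt_iff₀ hC] at hrx; linarith)
  refine ⟨x, hXx, fun y ⟨hxy, hyr⟩ => ?_⟩
  have hmvt := abs_sub_le_of_abs_deriv_le_rpow ha1.le hA.le (hf.differentiableOn one_ne_zero)
    hderiv hx0 hxy
  have hshort : A * x ^ (a - 1) * (y - x) ≤ A * r * x ^ (a - 1) := by
    rw [mul_right_comm]
    exact mul_le_mul_of_nonneg_right (by nlinarith) (Real.rpow_nonneg hx0.le _)
  linarith [neg_abs_le (f y - f x)]

theorem stmt_3 (f : ℝ → ℝ) (a A : ℝ) (ha0 : 0 < a) (ha1 : a < 1) (hA : 0 < A)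
    (hf : ContDiffOn ℝ 1 f (Set.Ioi 0))
    (hderiv : ∀ x : ℝ, 0 < x → |deriv f x| ≤ A * x ^ (a - 1))
    (hΩ : ∃ C > 0, ∀ X : ℝ, ∃ x > X, f x > C * x ^ a) :
    ∃ C' > 0, ∀ r > 0, ∀ X : ℝ, ∃ x > X,
      ∀ y ∈ Set.Ico x (x + r), f y > C' * x ^ a :=
  stmt_3_general f a A ha1 hA hf hderiv hΩ
end

section
/- Suppose f : ℕ → {0, ±1}, α ∈ (0,1], A ∈ (0,1/2), and real functions φ, φ* on (0,∞) satisfy: (i) p(x,f) = e^{φ(x)} [ e^{φ*(x)} + (−1)^x e^{−φ*(x)} + O(x^{−1/5} e^{|φ*(x)|}) ] as x → ∞ along integers; (ii) φ(x) = ακ√x + O(x^{A+ε}); (iii) φ*(x) = O(x^{A+ε}); (iv) for every r > 0 there exist arbitrarily large x with φ*(y) > C x^{A−ε} for all y ∈ [x, x+r), for some C > 0. Then for every ε' > 0 and L ∈ ℕ there exist arbitrarily large N ∈ ℕ such that |logsc p(n,f)/(ακ√n) − 1| < ε' for all N ≤ n ≤ N+L−1. -/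
noncomputable def logsc (x : ℝ) : ℝ := Real.sign x * Real.log (|x| + 1)

/-- `κ = π√(2/3)`. -/
noncomputable def kappa : ℝ := Real.pi * Real.sqrt (2 / 3)

/-- The signed partition number `p(n,f) = ∑_{π ∈ Π[n]} f(x₁)⋯f(x_k)`. -/
noncomputable def pnf (f : ℕ → ℤ) (n : ℕ) : ℤ :=
  ∑ π : n.Partition, (π.parts.map f).prod

set_option maxHeartbeats 1000000 in
theorem stmt_17 (f : ℕ → ℤ) (hf : ∀ n, f n = 0 ∨ f n = 1 ∨ f n = -1)
    (α A : ℝ) (hα0 : 0 < α) (hα1 : α ≤ 1) (hA0 : 0 < A) (hA : A < 1 / 2)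
    (φ φs : ℝ → ℝ)
    (hi : ∃ K x₀ : ℝ, ∀ n : ℕ, x₀ ≤ (n : ℝ) →
      |(pnf f n : ℝ) -
          Real.exp (φ n) * (Real.exp (φs n) + (-1 : ℝ) ^ n * Real.exp (-(φs n)))| ≤
        K * (n : ℝ) ^ (-(1 : ℝ) / 5) * Real.exp (φ n) * Real.exp |φs n|)
    (hii : ∀ ε > 0, ∃ K : ℝ, ∀ x : ℝ, 1 ≤ x →
      |φ x - α * kappa * Real.sqrt x| ≤ K * x ^ (A + ε))
    (hiii : ∀ ε > 0, ∃ K : ℝ, ∀ x : ℝ, 1 ≤ x → |φs x| ≤ K * x ^ (A + ε))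
    (hiv : ∀ ε : ℝ, 0 < ε → ε < A → ∃ C > 0, ∀ r > 0, ∀ X : ℝ, ∃ x ≥ X,
      ∀ y ∈ Set.Ico x (x + r), φs y > C * x ^ (A - ε)) :
    ∀ ε' > 0, ∀ L : ℕ, 0 < L → ∀ M : ℕ, ∃ N : ℕ, M ≤ N ∧
      ∀ n : ℕ, N ≤ n → n ≤ N + L - 1 →
        |logsc (pnf f n : ℝ) / (α * kappa * Real.sqrt n) - 1| < ε' := by
  intro ε' hε' L hL M
  have hκ : 0 < kappa := by
    unfold kappa
    have : (0:ℝ) < Real.sqrt (2/3) := Real.sqrt_pos.mpr (by norm_num)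
    exact mul_pos Real.pi_pos this
  have hακ : 0 < α * kappa := mul_pos hα0 hκ
  set ε : ℝ := min A (1/2 - A) / 2 with hεdef
  have hminA := min_le_left A (1/2 - A)
  have hminB := min_le_right A (1/2 - A)
  have hmin0 : 0 < min A (1/2 - A) := lt_min hA0 (by linarith)
  have hε0 : 0 < ε := by simp only [hεdef]; linarith
  have hεA : ε < A := by simp only [hεdef]; linarith
  have hAε : A + ε < 1/2 := by simp only [hεdef]; linarith
  have hAε0 : 0 < A + ε := by linarith
  obtain ⟨K₁, x₀, h1⟩ := hi
  obtain ⟨K₂, h2⟩ := hii ε hε0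
  obtain ⟨K₃, h3⟩ := hiii ε hε0
  obtain ⟨C, hC, h4⟩ := hiv ε hε0 hεA
  set K₁' : ℝ := max K₁ 0 with hK₁'
  set Kt : ℝ := max K₂ 0 + max K₃ 0 with hKtdef
  have hKt0 : 0 ≤ Kt := by positivity
  set δ : ℝ := 1/2 - (A + ε) with hδdef
  have hδ0 : 0 < δ := by simp only [hδdef]; linarith
  set B : ℝ := (Kt + 3) / (ε' * (α * kappa)) with hBdef
  -- eventual conditions
  have e1 : ∀ᶠ z : ℝ in Filter.atTop, 1 ≤ z := Filter.eventually_ge_atTop 1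
  have e2 : ∀ᶠ z : ℝ in Filter.atTop, x₀ ≤ z := Filter.eventually_ge_atTop x₀
  have e3 : ∀ᶠ z : ℝ in Filter.atTop, (M:ℝ) ≤ z := Filter.eventually_ge_atTop (M:ℝ)
  have e4 : ∀ᶠ z : ℝ in Filter.atTop, K₁' * z ^ (-(1:ℝ)/5) ≤ 1/4 := by
    have h := (tendsto_rpow_neg_atTop (by norm_num : (0:ℝ) < 1/5)).const_mul K₁'
    rw [mul_zero] at h
    have h' := h.eventually_lt_const (by norm_num : (0:ℝ) < 1/4)
    filter_upwards [h'] with z hz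
    have he : -(1:ℝ)/5 = -(1/5 : ℝ) := by norm_num
    rw [he]
    exact hz.le
  have e5 : ∀ᶠ z : ℝ in Filter.atTop, B ≤ z ^ δ :=
    (tendsto_rpow_atTop hδ0).eventually_ge_atTop B
  have e6 : ∀ᶠ z : ℝ in Filter.atTop, 1 ≤ C * z ^ (A - ε) :=
    ((tendsto_rpow_atTop (by linarith : (0:ℝ) < A - ε)).const_mul_atTop
      hC).eventually_ge_atTop 1
  have hev := ((e1.and (e2.and e3)).and (e4.and (e5.and e6)))
  obtain ⟨X, hX⟩ := Filter.eventually_atTop.mp hev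
  obtain ⟨x, hxX, hx⟩ := h4 ((L:ℝ) + 1) (by positivity) X
  obtain ⟨⟨hx1, hxx₀, hxM⟩, _, _, hxC⟩ := hX x hxX
  refine ⟨⌈x⌉₊, ?_, ?_⟩
  · exact_mod_cast hxM.trans (Nat.le_ceil x)
  intro n hnN hnL
  have hxn : x ≤ (n:ℝ) := (Nat.le_ceil x).trans (by exact_mod_cast hnN)
  have hn1 : (1:ℝ) ≤ (n:ℝ) := hx1.trans hxn
  have hn0 : (0:ℝ) < (n:ℝ) := by linarith
  obtain ⟨⟨_, hnx₀, _⟩, hnK₁, hnB, _⟩ := hX (n:ℝ) (hxX.trans hxn)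
  -- n is in the window
  have hceil : (⌈x⌉₊ : ℝ) < x + 1 := Nat.ceil_lt_add_one (by linarith)
  have hnlt : (n:ℝ) < x + ((L:ℝ) + 1) := by
    have h' : n + 1 ≤ ⌈x⌉₊ + L := by omega
    have h'' : (n:ℝ) + 1 ≤ (⌈x⌉₊:ℝ) + (L:ℝ) := by exact_mod_cast h'
    linarith
  have hψbig : φs (n:ℝ) > C * x ^ (A - ε) := hx (n:ℝ) ⟨hxn, hnlt⟩
  have hψ1 : (1:ℝ) ≤ φs (n:ℝ) := le_of_lt (lt_of_le_of_lt hxC hψbig)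
  -- key hypotheses instantiated at n, before abbreviating
  have hbound := h1 n hnx₀
  rw [abs_of_pos (by linarith : (0:ℝ) < φs (n:ℝ))] at hbound
  have h2n := h2 (n:ℝ) hn1
  have h3n := h3 (n:ℝ) hn1
  rw [abs_of_pos (by linarith : (0:ℝ) < φs (n:ℝ))] at h3n
  -- abbreviations
  set ψ : ℝ := φs (n:ℝ) with hψdef
  set Φ : ℝ := φ (n:ℝ) with hΦdef
  set P : ℝ := ((pnf f n : ℤ) : ℝ) with hPdef
  set E : ℝ := Real.exp Φ with hEdef
  have hE : (0:ℝ) < E := Real.exp_pos _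
  have heψ : (0:ℝ) < Real.exp ψ := Real.exp_pos _
  -- error term bound
  have hr5 : (0:ℝ) ≤ (n:ℝ) ^ (-(1:ℝ)/5) := Real.rpow_nonneg hn0.le _
  have herr : K₁ * (n:ℝ) ^ (-(1:ℝ)/5) * E * Real.exp ψ ≤ (1/4) * (E * Real.exp ψ) := by
    have h5 : K₁ * (n:ℝ) ^ (-(1:ℝ)/5) ≤ 1/4 :=
      le_trans (mul_le_mul_of_nonneg_right (le_max_left K₁ 0) hr5) hnK₁
    calc K₁ * (n:ℝ) ^ (-(1:ℝ)/5) * E * Real.exp ψ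
        = (K₁ * (n:ℝ) ^ (-(1:ℝ)/5)) * (E * Real.exp ψ) := by ring
      _ ≤ (1/4) * (E * Real.exp ψ) :=
          mul_le_mul_of_nonneg_right h5 (mul_pos hE heψ).le
  have hbound2 : |P - E * (Real.exp ψ + (-1:ℝ)^n * Real.exp (-ψ))|
      ≤ (1/4) * (E * Real.exp ψ) := le_trans hbound herr
  obtain ⟨hbl, hbu⟩ := abs_le.mp hbound2
  -- e^{-ψ} ≤ (1/4) e^ψ
  have hexp2 : Real.exp (-ψ) ≤ (1/4) * Real.exp ψ := by
    have ha : Real.exp (-ψ) ≤ Real.exp (-1) := Real.exp_le_exp.mpr (by linarith)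
    have hb : Real.exp 1 ≤ Real.exp ψ := Real.exp_le_exp.mpr hψ1
    have he : (2:ℝ) < Real.exp 1 := by have := Real.exp_one_gt_d9; linarith
    have hc : Real.exp (-1) = (Real.exp 1)⁻¹ := Real.exp_neg 1
    have hd : (Real.exp 1)⁻¹ ≤ 1/2 := by
      rw [inv_le_comm₀ (Real.exp_pos 1) (by norm_num)]
      linarith
    linarith
  have hsle : |(-1:ℝ)^n * Real.exp (-ψ)| = Real.exp (-ψ) := by
    rw [abs_mul, abs_pow, abs_neg, abs_one, one_pow, one_mul,
      abs_of_pos (Real.exp_pos _)]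
  obtain ⟨hsl, hsu⟩ := abs_le.mp (le_of_eq hsle)
  -- sandwich P
  have hin : (3/4) * Real.exp ψ ≤ Real.exp ψ + (-1:ℝ)^n * Real.exp (-ψ) := by linarith
  have hin2 : Real.exp ψ + (-1:ℝ)^n * Real.exp (-ψ) ≤ (5/4) * Real.exp ψ := by linarith
  have hM1l : (3/4) * (E * Real.exp ψ) ≤ E * (Real.exp ψ + (-1:ℝ)^n * Real.exp (-ψ)) := by
    have := mul_le_mul_of_nonneg_left hin hE.le
    linarith only [this]
  have hM1u : E * (Real.exp ψ + (-1:ℝ)^n * Real.exp (-ψ)) ≤ (5/4) * (E * Real.exp ψ) := by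
    have := mul_le_mul_of_nonneg_left hin2 hE.le
    linarith only [this]
  have hPlow : (1/2) * (E * Real.exp ψ) ≤ P := by linarith
  have hPup : P ≤ (3/2) * (E * Real.exp ψ) := by linarith
  have hP0 : (0:ℝ) < P := lt_of_lt_of_le (by positivity) hPlow
  have hP1 : (1:ℝ) ≤ P := by
    have h0 : (0:ℝ) < ((pnf f n : ℤ) : ℝ) := by rw [← hPdef]; exact hP0
    have hZ : (0:ℤ) < pnf f n := by exact_mod_cast h0
    rw [hPdef]
    exact_mod_cast hZ
  -- logsc
  have hlogsc : logsc P = Real.log (P + 1) := by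
    unfold logsc
    rw [Real.sign_of_pos hP0, abs_of_pos hP0, one_mul]
  have hup : Real.log (P + 1) ≤ Φ + ψ + 2 := by
    have h' : P + 1 ≤ 3 * (E * Real.exp ψ) := by linarith only [hP1, hPup, hPlow]
    have h'' : Real.log (P + 1) ≤ Real.log (3 * (E * Real.exp ψ)) :=
      Real.log_le_log (by linarith) h'
    have h3' : Real.log (3 * (E * Real.exp ψ)) = Real.log 3 + (Φ + ψ) := by
      rw [Real.log_mul (by norm_num) (by positivity), Real.log_mul hE.ne' heψ.ne',
        hEdef, Real.log_exp, Real.log_exp]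
    have hlog3 : Real.log 3 ≤ 2 := by
      have := Real.log_le_sub_one_of_pos (by norm_num : (0:ℝ) < 3)
      linarith
    linarith
  have hlow : Φ + ψ - 1 ≤ Real.log (P + 1) := by
    have h' : Real.log ((1/2) * (E * Real.exp ψ)) ≤ Real.log (P + 1) :=
      Real.log_le_log (by positivity) (by linarith)
    have h'' : Real.log ((1/2) * (E * Real.exp ψ)) = Real.log (1/2) + (Φ + ψ) := by
      rw [Real.log_mul (by norm_num) (by positivity), Real.log_mul hE.ne' heψ.ne',
        hEdef, Real.log_exp, Real.log_exp]
    have hhalf : (-1:ℝ) ≤ Real.log (1/2) := by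
      have h2' : Real.log (1/2) = -Real.log 2 := by rw [one_div, Real.log_inv]
      have := Real.log_le_sub_one_of_pos (by norm_num : (0:ℝ) < 2)
      linarith
    linarith
  have hnear : |logsc P - (Φ + ψ)| ≤ 2 := by
    rw [hlogsc, abs_le]; constructor <;> linarith
  -- asymptotic bounds
  have hrpow0 : (0:ℝ) ≤ (n:ℝ) ^ (A + ε) := Real.rpow_nonneg hn0.le _
  have hrpow1 : (1:ℝ) ≤ (n:ℝ) ^ (A + ε) := Real.one_le_rpow hn1 hAε0.le
  obtain ⟨h2l, h2u⟩ := abs_le.mp h2n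
  have hK₂' : K₂ * (n:ℝ) ^ (A + ε) ≤ max K₂ 0 * (n:ℝ) ^ (A + ε) :=
    mul_le_mul_of_nonneg_right (le_max_left _ _) hrpow0
  have hK₃' : K₃ * (n:ℝ) ^ (A + ε) ≤ max K₃ 0 * (n:ℝ) ^ (A + ε) :=
    mul_le_mul_of_nonneg_right (le_max_left _ _) hrpow0
  set D : ℝ := α * kappa * Real.sqrt (n:ℝ) with hDdef
  have hsq : (0:ℝ) < Real.sqrt (n:ℝ) := Real.sqrt_pos.mpr hn0
  have hD : (0:ℝ) < D := mul_pos hακ hsq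
  have hKtexp : Kt * (n:ℝ) ^ (A + ε) = max K₂ 0 * (n:ℝ) ^ (A + ε)
      + max K₃ 0 * (n:ℝ) ^ (A + ε) := by rw [hKtdef]; ring
  have htotal : |logsc P - D| ≤ 2 + Kt * (n:ℝ) ^ (A + ε) := by
    obtain ⟨hnl, hnu⟩ := abs_le.mp hnear
    rw [abs_le, hKtexp]
    have hψpos : (0:ℝ) < ψ := by linarith
    constructor <;> linarith
  -- the key inequality: 2 + Kt n^{A+ε} < ε' * D
  have hkey : 2 + Kt * (n:ℝ) ^ (A + ε) < ε' * D := by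
    have hsqrt : Real.sqrt (n:ℝ) = (n:ℝ) ^ ((A + ε) + δ) := by
      rw [Real.sqrt_eq_rpow]
      congr 1
      rw [hδdef]; ring
    have hsplit : (n:ℝ) ^ ((A + ε) + δ) = (n:ℝ) ^ (A + ε) * (n:ℝ) ^ δ :=
      Real.rpow_add hn0 _ _
    have hBeq : ε' * (α * kappa) * B = Kt + 3 := by
      rw [hBdef]
      field_simp
    have hchain : (Kt + 3) * (n:ℝ) ^ (A + ε) ≤ ε' * D := by
      rw [hDdef]
      have heq : ε' * (α * kappa * Real.sqrt (n:ℝ))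
          = (ε' * (α * kappa) * (n:ℝ) ^ δ) * (n:ℝ) ^ (A + ε) := by
        rw [hsqrt, hsplit]; ring
      rw [heq]
      apply mul_le_mul_of_nonneg_right _ hrpow0
      calc Kt + 3 = ε' * (α * kappa) * B := hBeq.symm
        _ ≤ ε' * (α * kappa) * (n:ℝ) ^ δ :=
            mul_le_mul_of_nonneg_left hnB (by positivity)
    have hexp : (Kt + 3) * (n:ℝ) ^ (A + ε) = Kt * (n:ℝ) ^ (A + ε) + 3 * ((n:ℝ) ^ (A + ε)) := by
      ring
    linarith only [hchain, hrpow1, hexp]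
  -- final arithmetic
  have hrw : logsc P / D - 1 = (logsc P - D) / D := by field_simp
  rw [hrw, abs_div, abs_of_pos hD, div_lt_iff₀ hD]
  calc |logsc P - D| ≤ 2 + Kt * (n:ℝ) ^ (A + ε) := htotal
    _ < ε' * D := hkey
end

section
/- For any f : ℕ → {0, ±1} and integers n ≥ 2, the signed partition numbers satisfy the recursion n·p(n,f) = ∑_{k=1}^{n−1} p(k,f)·𝔖(n−k,f) + 𝔖(n,f), where 𝔖(m,f) = ∑_{d | m} d·f(d)^{m/d} and p(0,f) := 1. -/
/-- `𝔖(m,f) = ∑_{d ∣ m} d ⋅ f(d)^{m/d}`. -/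
def frakS (f : ℕ → ℤ) (m : ℕ) : ℤ :=
  ∑ d ∈ m.divisors, (d : ℤ) * f d ^ (m / d)

lemma pnf_zero (f : ℕ → ℤ) : pnf f 0 = 1 := by
  rw [pnf, Fintype.sum_unique]
  simp

/-- Key lemma: `∑_π count_d(π)·f(π) = ∑_{j≥1, jd≤n} f(d)^j p(n-jd)`. -/
lemma sum_count_mul (f : ℕ → ℤ) (d : ℕ) (hd : 0 < d) : ∀ n : ℕ,
    ∑ π : n.Partition, (π.parts.count d : ℤ) * (π.parts.map f).prod
      = ∑ j ∈ Finset.range (n / d), f d ^ (j + 1) * pnf f (n - (j + 1) * d) := by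
  intro n
  induction n using Nat.strong_induction_on with
  | _ n ih =>
  by_cases h : d ≤ n
  · have key : ∑ π : n.Partition, (π.parts.count d : ℤ) * (π.parts.map f).prod
        = ∑ μ : (n - d).Partition,
            ((μ.parts.count d : ℤ) + 1) * (f d * (μ.parts.map f).prod) := by
      rw [← Finset.sum_filter_of_ne (p := fun π : n.Partition => d ∈ π.parts)
        (by intro π _ hπ
            by_contra hmem
            rw [Multiset.count_eq_zero_of_notMem hmem] at hπ
            simp at hπ)]
      refine Finset.sum_bij'
        (fun (π : n.Partition) (hπ : π ∈ Finset.univ.filter fun π : n.Partition => d ∈ π.parts) =>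
          (⟨π.parts.erase d,
            fun {i} hi => π.parts_pos (Multiset.mem_of_mem_erase hi),
            by
              have hmem : d ∈ π.parts := (Finset.mem_filter.mp hπ).2
              have hs := congrArg Multiset.sum (Multiset.cons_erase hmem)
              rw [Multiset.sum_cons, π.parts_sum] at hs
              omega⟩ : (n - d).Partition))
        (fun μ _ =>
          (⟨d ::ₘ μ.parts,
            fun {i} hi => by
              rcases Multiset.mem_cons.mp hi with h1 | h2
              · omega
              · exact μ.parts_pos h2,
            by rw [Multiset.sum_cons, μ.parts_sum]; omega⟩ : n.Partition))
        (fun π hπ => Finset.mem_univ _)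
        (fun μ _ => by simp)
        (fun π hπ => Nat.Partition.ext (by
          simp [Multiset.cons_erase (Finset.mem_filter.mp hπ).2]))
        (fun μ _ => Nat.Partition.ext (by simp))
        (fun π hπ => by
          have hmem : d ∈ π.parts := (Finset.mem_filter.mp hπ).2
          have hc : π.parts.count d = (π.parts.erase d).count d + 1 := by
            conv_lhs => rw [← Multiset.cons_erase hmem]
            simp
          have hp : (π.parts.map f).prod = f d * ((π.parts.erase d).map f).prod := by
            conv_lhs => rw [← Multiset.cons_erase hmem]
            simp
          rw [hc, hp]; push_cast; ring)
    rw [key]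
    have hlt : n - d < n := by omega
    have := ih (n - d) hlt
    have expand : ∑ μ : (n - d).Partition,
        ((μ.parts.count d : ℤ) + 1) * (f d * (μ.parts.map f).prod)
        = f d * ((∑ μ : (n - d).Partition, (μ.parts.count d : ℤ) * (μ.parts.map f).prod)
            + pnf f (n - d)) := by
      rw [pnf, mul_add, Finset.mul_sum, Finset.mul_sum, ← Finset.sum_add_distrib]
      refine Finset.sum_congr rfl fun μ _ => by ring
    rw [expand, this]
    have hdiv : n / d = (n - d) / d + 1 := by
      rw [Nat.div_eq_sub_div hd h]
    rw [hdiv, Finset.sum_range_succ']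
    rw [mul_add, Finset.mul_sum]
    congr 1
    · refine Finset.sum_congr rfl fun j hj => ?_
      have : n - d - (j + 1) * d = n - (j + 1 + 1) * d := by
        have : (j + 1 + 1) * d = (j + 1) * d + d := by ring
        omega
      rw [this]
      ring
    · simp
  · have h0 : n / d = 0 := Nat.div_eq_of_lt (by omega)
    rw [h0]
    simp only [Finset.range_zero, Finset.sum_empty]
    refine Finset.sum_eq_zero fun π _ => ?_
    have : d ∉ π.parts := by
      intro hmem
      have := Multiset.le_sum_of_mem hmem
      rw [π.parts_sum] at this
      omega
    rw [Multiset.count_eq_zero_of_notMem this]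
    simp

theorem stmt_19 (f : ℕ → ℤ) (hf : ∀ n, f n = 0 ∨ f n = 1 ∨ f n = -1)
    (n : ℕ) (hn : 2 ≤ n) :
    (n : ℤ) * pnf f n = (∑ k ∈ Finset.Ico 1 n, pnf f k * frakS f (n - k)) + frakS f n := by
  clear hf
  -- Step 1: n * p(n) = ∑_{d ∈ Icc 1 n} d * (∑_π count_d(π) f(π))
  have step1 : (n : ℤ) * pnf f n
      = ∑ d ∈ Finset.Icc 1 n, (d : ℤ) *
          ∑ π : n.Partition, (π.parts.count d : ℤ) * (π.parts.map f).prod := by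
    rw [pnf, Finset.mul_sum]
    have hper : ∀ π : n.Partition, (n : ℤ) * (π.parts.map f).prod
        = ∑ d ∈ Finset.Icc 1 n, (d : ℤ) * ((π.parts.count d : ℤ) * (π.parts.map f).prod) := by
      intro π
      have hsum : (n : ℤ) = ∑ d ∈ Finset.Icc 1 n, (d : ℤ) * (π.parts.count d : ℤ) := by
        have h1 : π.parts.sum = ∑ d ∈ π.parts.toFinset, π.parts.count d * d := by
          conv_lhs => rw [show π.parts.sum = (π.parts.map id).sum by simp]
          rw [Finset.sum_multiset_map_count]
          simp [mul_comm]
        have h2 : π.parts.toFinset ⊆ Finset.Icc 1 n := by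
          intro x hx
          rw [Multiset.mem_toFinset] at hx
          have := π.parts_pos hx
          have := Multiset.le_sum_of_mem hx
          rw [π.parts_sum] at this
          simp only [Finset.mem_Icc]; omega
        have h3 : π.parts.sum = ∑ d ∈ Finset.Icc 1 n, π.parts.count d * d := by
          rw [h1]
          refine Finset.sum_subset h2 fun x _ hx => ?_
          rw [Multiset.count_eq_zero_of_notMem (by simpa using hx)]
          ring
        have h4 : n = ∑ d ∈ Finset.Icc 1 n, π.parts.count d * d := π.parts_sum.symm.trans h3
        conv_lhs => rw [h4]
        push_cast
        refine Finset.sum_congr rfl fun d _ => by ring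
      rw [hsum, Finset.sum_mul]
      refine Finset.sum_congr rfl fun d _ => by ring
    rw [Finset.sum_congr rfl fun π _ => hper π, Finset.sum_comm]
    exact Finset.sum_congr rfl fun d _ => (Finset.mul_sum _ _ _).symm
  rw [step1]
  -- Step 2: apply key lemma and rewrite into double sum over pairs
  have step2 : ∑ d ∈ Finset.Icc 1 n, (d : ℤ) *
          ∑ π : n.Partition, (π.parts.count d : ℤ) * (π.parts.map f).prod
      = ∑ m ∈ Finset.Icc 1 n, frakS f m * pnf f (n - m) := by
    have lhs_eq : ∀ d ∈ Finset.Icc 1 n, (d : ℤ) *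
          ∑ π : n.Partition, (π.parts.count d : ℤ) * (π.parts.map f).prod
        = ∑ j ∈ Finset.range (n / d), (d : ℤ) * f d ^ (j + 1) * pnf f (n - (j + 1) * d) := by
      intro d hd
      rw [Finset.mem_Icc] at hd
      rw [sum_count_mul f d (by omega) n, Finset.mul_sum]
      exact Finset.sum_congr rfl fun j _ => by ring
    rw [Finset.sum_congr rfl lhs_eq]
    -- rewrite RHS with frakS expanded
    have rhs_eq : ∀ m ∈ Finset.Icc 1 n, frakS f m * pnf f (n - m)
        = ∑ e ∈ m.divisors, (e : ℤ) * f e ^ (m / e) * pnf f (n - m) := by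
      intro m hm
      rw [frakS, Finset.sum_mul]
    rw [Finset.sum_congr rfl rhs_eq]
    rw [Finset.sum_sigma', Finset.sum_sigma']
    refine Finset.sum_nbij' (fun p => ⟨(p.2 + 1) * p.1, p.1⟩) (fun p => ⟨p.2, p.1 / p.2 - 1⟩)
      ?_ ?_ ?_ ?_ ?_
    · rintro ⟨d, j⟩ hp
      simp only [Finset.mem_sigma, Finset.mem_Icc, Finset.mem_range] at hp ⊢
      obtain ⟨⟨hd1, hdn⟩, hj⟩ := hp
      have hj1 : j + 1 ≤ n / d := hj
      have hle : (j + 1) * d ≤ n := by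
        calc (j + 1) * d ≤ (n / d) * d := Nat.mul_le_mul_right d hj1
        _ ≤ n := Nat.div_mul_le_self n d
      refine ⟨⟨Nat.one_le_iff_ne_zero.mpr (Nat.mul_ne_zero (by omega) (by omega)), hle⟩, ?_⟩
      rw [Nat.mem_divisors]
      exact ⟨⟨j + 1, by ring⟩, Nat.mul_ne_zero (by omega) (by omega)⟩
    · rintro ⟨m, e⟩ hp
      simp only [Finset.mem_sigma, Finset.mem_Icc, Nat.mem_divisors] at hp ⊢
      obtain ⟨⟨hm1, hmn⟩, hem, hm0⟩ := hp
      obtain ⟨c, hc⟩ := hem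
      have he0 : 0 < e := by
        rcases Nat.eq_zero_or_pos e with h | h
        · subst h; simp at hc; omega
        · exact h
      have hc0 : 0 < c := by
        rcases Nat.eq_zero_or_pos c with h | h
        · subst h; simp at hc; omega
        · exact h
      have hdiv : m / e = c := by rw [hc]; exact Nat.mul_div_cancel_left c he0
      refine ⟨⟨he0, Nat.le_trans (Nat.le_of_dvd (by omega) ⟨c, hc⟩) hmn⟩, ?_⟩
      rw [Finset.mem_range, hdiv]
      have h5 : e * c ≤ n := by omega
      have : c ≤ n / e := by
        calc c = (e * c) / e := (Nat.mul_div_cancel_left c he0).symm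
        _ ≤ n / e := Nat.div_le_div_right h5
      omega
    · rintro ⟨d, j⟩ hp
      simp only [Finset.mem_sigma, Finset.mem_Icc, Finset.mem_range] at hp
      obtain ⟨⟨hd1, _⟩, _⟩ := hp
      have : (j + 1) * d / d = j + 1 := Nat.mul_div_cancel _ (by omega)
      simp [this]
    · rintro ⟨m, e⟩ hp
      simp only [Finset.mem_sigma, Finset.mem_Icc, Nat.mem_divisors] at hp
      obtain ⟨⟨hm1, hmn⟩, hem, hm0⟩ := hp
      obtain ⟨c, hc⟩ := hem
      have he0 : 0 < e := by
        rcases Nat.eq_zero_or_pos e with h | h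
        · subst h; simp at hc; omega
        · exact h
      have hdiv : m / e = c := by rw [hc]; exact Nat.mul_div_cancel_left c he0
      have hc0 : 0 < c := by
        rcases Nat.eq_zero_or_pos c with h | h
        · subst h; simp at hc; omega
        · exact h
      have h6 : (m / e - 1 + 1) * e = m := by
        have h7 : m / e - 1 + 1 = c := by omega
        rw [h7, hc, mul_comm]
      simp [h6]
    · rintro ⟨d, j⟩ hp
      simp only [Finset.mem_sigma, Finset.mem_Icc, Finset.mem_range] at hp
      obtain ⟨⟨hd1, _⟩, _⟩ := hp
      have : (j + 1) * d / d = j + 1 := Nat.mul_div_cancel _ (by omega)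
      simp [this]
  rw [step2]
  -- Step 3: split off m = n and reindex m ↦ n - m
  have hIcc : Finset.Icc 1 n = Finset.Ico 1 (n + 1) := by
    ext x; simp [Nat.lt_succ_iff]
  rw [hIcc, Finset.sum_Ico_succ_top (by omega)]
  rw [Nat.sub_self, pnf_zero, mul_one]
  congr 1
  refine Finset.sum_nbij' (fun m => n - m) (fun k => n - k) ?_ ?_ ?_ ?_ ?_
  · intro m hm; simp only [Finset.mem_Ico] at hm ⊢; omega
  · intro k hk; simp only [Finset.mem_Ico] at hk ⊢; omega
  · intro m hm; simp only [Finset.mem_Ico] at hm; show n - (n - m) = m; omega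
  · intro k hk; simp only [Finset.mem_Ico] at hk; show n - (n - k) = k; omega
  · intro m hm
    simp only [Finset.mem_Ico] at hm
    show frakS f m * pnf f (n - m) = pnf f (n - m) * frakS f (n - (n - m))
    have h1 : n - (n - m) = m := by omega
    rw [h1, mul_comm]
end
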